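/- arXiv:1003.5603 — 2 statements merged into one kernel-verified Lean document; each statement's English description precedes it below -/
import Mathlib

section
/- In the symmetric group S₄, consider pairs (σ, τ) of 3-cycles whose product στ is also a 3-cycle. Under the simultaneous conjugation action of S₄ on such pairs, there are exactly two orbits: one represented by ((1 2 3), (1 2 3)) and one represented by ((1 2 3), (2 4 3)). Moreover, the stabilizer of the first representative is cyclic of order 3, and the stabilizer of the second is trivial. -/
set_option maxRecDepth 100000
set_option maxHeartbeats 4000000

open Equiv

/-- The 3-cycle `(1 2 3)` in `S₄` (on `{0,1,2,3}`: `0 → 1 → 2 → 0`, fixing `3`). -/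
def p123 : Equiv.Perm (Fin 4) := Equiv.swap 0 2 * Equiv.swap 0 1

/-- The 3-cycle `(2 4 3)` in `S₄` (on `{0,1,2,3}`: `1 → 3 → 2 → 1`, fixing `0`). -/
def p243 : Equiv.Perm (Fin 4) := Equiv.swap 1 2 * Equiv.swap 1 3

lemma stab1 : MulAction.stabilizer (ConjAct (Equiv.Perm (Fin 4)))
        ((p123, p123) : Equiv.Perm (Fin 4) × Equiv.Perm (Fin 4)) =
      Subgroup.zpowers (ConjAct.toConjAct p123) := by
  refine le_antisymm ?_ (Subgroup.zpowers_le.mpr ?_)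
  · intro x hx
    rw [MulAction.mem_stabilizer_iff] at hx
    simp only [Prod.smul_mk, ConjAct.smul_def, Prod.mk.injEq] at hx
    have key : ConjAct.ofConjAct x = p123 ^ 0 ∨ ConjAct.ofConjAct x = p123 ^ 1 ∨
        ConjAct.ofConjAct x = p123 ^ 2 := by
      have h1 := hx.1
      revert h1
      generalize ConjAct.ofConjAct x = y
      revert y; decide
    rcases key with h|h|h <;>
    · rw [← ConjAct.toConjAct_ofConjAct x, h, map_pow]
      exact Subgroup.pow_mem _ (Subgroup.mem_zpowers _) _
  · rw [MulAction.mem_stabilizer_iff]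
    simp only [Prod.smul_mk, ConjAct.smul_def, Prod.mk.injEq]
    constructor <;> decide

lemma stab2 : MulAction.stabilizer (ConjAct (Equiv.Perm (Fin 4)))
        ((p123, p243) : Equiv.Perm (Fin 4) × Equiv.Perm (Fin 4)) = ⊥ := by
  rw [eq_bot_iff]
  intro x hx
  rw [MulAction.mem_stabilizer_iff] at hx
  simp only [Prod.smul_mk, ConjAct.smul_def, Prod.mk.injEq] at hx
  have key : ConjAct.ofConjAct x = 1 := by
    revert hx
    generalize ConjAct.ofConjAct x = y
    revert y; decide
  rw [Subgroup.mem_bot, ← ConjAct.toConjAct_ofConjAct x, key, map_one]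

lemma order3 : orderOf (ConjAct.toConjAct p123) = 3 := by
  refine orderOf_eq_prime ?_ ?_
  · rw [← map_pow]
    have : p123 ^ 3 = 1 := by decide
    rw [this, map_one]
  · intro h
    have : p123 = 1 := by
      have := congrArg ConjAct.ofConjAct h
      simpa using this
    revert this; decide

/-- In `S₄`, the pairs `(σ, τ)` of 3-cycles whose product `στ` is again a 3-cycle
form exactly two orbits under simultaneous conjugation, represented by
`((1 2 3), (1 2 3))` and `((1 2 3), (2 4 3))`; the stabilizer of the first
representative is cyclic of order 3 (generated by `(1 2 3)`), and the stabilizer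
of the second is trivial. -/
theorem two_orbits_of_pairs_of_three_cycles_in_S4 :
    p123.IsThreeCycle ∧ p243.IsThreeCycle ∧ (p123 * p243).IsThreeCycle ∧
    (∀ σ τ : Equiv.Perm (Fin 4), σ.IsThreeCycle → τ.IsThreeCycle →
      (σ * τ).IsThreeCycle →
      (∃ h : Equiv.Perm (Fin 4), (h * σ * h⁻¹, h * τ * h⁻¹) = (p123, p123)) ∨
      (∃ h : Equiv.Perm (Fin 4), (h * σ * h⁻¹, h * τ * h⁻¹) = (p123, p243))) ∧
    (¬ ∃ h : Equiv.Perm (Fin 4), (h * p123 * h⁻¹, h * p123 * h⁻¹) = (p123, p243)) ∧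
    (MulAction.stabilizer (ConjAct (Equiv.Perm (Fin 4)))
        ((p123, p123) : Equiv.Perm (Fin 4) × Equiv.Perm (Fin 4)) =
      Subgroup.zpowers (ConjAct.toConjAct p123)) ∧
    Nat.card ↥(MulAction.stabilizer (ConjAct (Equiv.Perm (Fin 4)))
        ((p123, p123) : Equiv.Perm (Fin 4) × Equiv.Perm (Fin 4))) = 3 ∧
    (MulAction.stabilizer (ConjAct (Equiv.Perm (Fin 4)))
        ((p123, p243) : Equiv.Perm (Fin 4) × Equiv.Perm (Fin 4)) = ⊥) := by
  refine ⟨?_, ?_, ?_, ?_, ?_, stab1, ?_, stab2⟩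
  · unfold Perm.IsThreeCycle; decide
  · unfold Perm.IsThreeCycle; decide
  · unfold Perm.IsThreeCycle; decide
  · unfold Perm.IsThreeCycle; decide
  · decide
  · rw [stab1, Nat.card_zpowers, order3]
end

section
/- Let f : X → Y be a functor between essentially finite groupoids. Then the pullback functor f* : [Y, Vect_ℂ] → [X, Vect_ℂ] given by precomposition with f admits a functor f_* : [X, Vect_ℂ] → [Y, Vect_ℂ] that is simultaneously a left adjoint and a right adjoint to f* (an ambidextrous adjunction). -/
open CategoryTheory

/-!
Over an essentially finite groupoid `J`, limits and colimits of a functor `F` into a `𝕜`-linear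
category (`char 𝕜 = 0`) coincide. If `ι` is a colimit cocone, let `π` be the cone on the same
point with `ι_j ≫ π_k` the average of `F u` over `u : j ⟶ k`. Averaging a constant family gives
it back, so `∑ₓ π_x ≫ ι_x = 𝟙` (sum over isomorphism classes), and this makes `π` a limit cone.

The left Kan extension `f_! F` along `f : X ⥤ Y` is computed pointwise by colimits over the comma
groupoids `f ↓ y`, which are essentially finite and equivalent to `y ↓ f`. Hence the same
averaging exhibits `f_! F` as a pointwise right Kan extension of `F`, whose counit at `x` is the
averaged projection onto `(x, 𝟙)`; so `f_!` is right adjoint to `f*` as well.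
-/

open Limits

namespace CategoryTheory

section Averaging

variable (𝕜 : Type*) [DivisionRing 𝕜]
  {J : Type*} [Category J] [∀ a b : J, Fintype (a ⟶ b)]
  {C : Type*} [Category C] [Preadditive C] [CategoryTheory.Linear 𝕜 C]

noncomputable def Functor.averageMap (F : J ⥤ C) (i j : J) : F.obj i ⟶ F.obj j :=
  (Fintype.card (i ⟶ j) : 𝕜)⁻¹ • ∑ u : i ⟶ j, F.map u

variable {𝕜}

namespace Functor

variable (F : J ⥤ C)

lemma averageMap_of_isEmpty {i j : J} [IsEmpty (i ⟶ j)] : F.averageMap 𝕜 i j = 0 := by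
  simp [averageMap]

lemma averageMap_comp_ι [CharZero 𝕜] {i j : J} [Nonempty (i ⟶ j)] (s : Cocone F) :
    F.averageMap 𝕜 i j ≫ s.ι.app j = s.ι.app i := by
  have : (Fintype.card (i ⟶ j) : 𝕜) ≠ 0 := Nat.cast_ne_zero.2 Fintype.card_ne_zero
  simp [averageMap, Preadditive.sum_comp, ← Nat.cast_smul_eq_nsmul 𝕜, smul_smul, this]

lemma π_comp_averageMap [CharZero 𝕜] {i j : J} [Nonempty (i ⟶ j)] (s : Cone F) :
    s.π.app i ≫ F.averageMap 𝕜 i j = s.π.app j := by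
  have : (Fintype.card (i ⟶ j) : 𝕜) ≠ 0 := Nat.cast_ne_zero.2 Fintype.card_ne_zero
  simp [averageMap, Preadditive.comp_sum, ← Nat.cast_smul_eq_nsmul 𝕜, smul_smul, this]

lemma map_comp_averageMap [IsGroupoid J] {i j k : J} (v : i ⟶ j) :
    F.map v ≫ F.averageMap 𝕜 j k = F.averageMap 𝕜 i k := by
  let e := (asIso v).symm.homFromEquiv (Z := k)
  simp only [averageMap, Linear.comp_smul, Preadditive.comp_sum, ← F.map_comp,
    Fintype.card_congr e, ← e.sum_comp]
  rfl

lemma averageMap_comp_map [IsGroupoid J] {i j k : J} (v : j ⟶ k) :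
    F.averageMap 𝕜 i j ≫ F.map v = F.averageMap 𝕜 i k := by
  let e := (asIso v).homToEquiv (Z := i)
  simp only [averageMap, Linear.smul_comp, Preadditive.sum_comp, ← F.map_comp,
    Fintype.card_congr e, ← e.sum_comp]
  rfl

lemma averageMap_comp_app {G : J ⥤ C} (τ : F ⟶ G) (i j : J) :
    F.averageMap 𝕜 i j ≫ τ.app j = τ.app i ≫ G.averageMap 𝕜 i j := by
  simp [averageMap, Preadditive.sum_comp, Preadditive.comp_sum]

lemma averageMap_comp_of_fullyFaithful {K : Type*} [Category K] [∀ a b : K, Fintype (a ⟶ b)]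
    {Φ : K ⥤ J} (hΦ : Φ.FullyFaithful) (a b : K) :
    (Φ ⋙ F).averageMap 𝕜 a b = F.averageMap 𝕜 (Φ.obj a) (Φ.obj b) := by
  simp only [averageMap, Fintype.card_congr hΦ.homEquiv, ← hΦ.homEquiv.sum_comp]
  rfl

variable [IsGroupoid J] [CharZero 𝕜] [Fintype (Skeleton J)] {F}

lemma sum_skeleton_averageMap_comp_ι (s : Cocone F) (j : J) :
    ∑ x : Skeleton J, F.averageMap 𝕜 j ((fromSkeleton J).obj x) ≫ s.ι.app _ = s.ι.app j := by
  rw [Fintype.sum_eq_single (toSkeleton j)]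
  · have : Nonempty (j ⟶ (fromSkeleton J).obj (toSkeleton j)) :=
      ⟨(fromSkeletonToSkeletonIso j).inv⟩
    exact F.averageMap_comp_ι s
  · intro x hx
    have : IsEmpty (j ⟶ (fromSkeleton J).obj x) :=
      ⟨fun u => hx (toSkeleton_eq_iff.2 ⟨asIso u⟩).symm⟩
    rw [averageMap_of_isEmpty, zero_comp]

lemma sum_skeleton_π_comp_averageMap (s : Cone F) (j : J) :
    ∑ x : Skeleton J, s.π.app ((fromSkeleton J).obj x) ≫ F.averageMap 𝕜 _ j = s.π.app j := by
  rw [Fintype.sum_eq_single (toSkeleton j)]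
  · have : Nonempty ((fromSkeleton J).obj (toSkeleton j) ⟶ j) :=
      ⟨(fromSkeletonToSkeletonIso j).hom⟩
    exact F.π_comp_averageMap s
  · intro x hx
    have : IsEmpty ((fromSkeleton J).obj x ⟶ j) :=
      ⟨fun u => hx (toSkeleton_eq_iff.2 ⟨(asIso u).symm⟩).symm⟩
    rw [averageMap_of_isEmpty, comp_zero]

end Functor

namespace Limits

variable (𝕜) in
@[simps]
noncomputable def Cocone.ofAverageMap [IsGroupoid J] (F : J ⥤ C) (k : J) : Cocone F where
  pt := F.obj k
  ι.app j := F.averageMap 𝕜 j k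
  ι.naturality _ _ v := by simp [Functor.map_comp_averageMap]

variable [IsGroupoid J] [CharZero 𝕜] [Fintype (Skeleton J)]

noncomputable def IsColimit.isLimitOfAverageMap {F : J ⥤ C} {P : C}
    {ι : F ⟶ (Functor.const J).obj P} (hι : IsColimit (Cocone.mk P ι))
    (π : (Functor.const J).obj P ⟶ F) (h : ∀ j k, ι.app j ≫ π.app k = F.averageMap 𝕜 j k) :
    IsLimit (Cone.mk P π) :=
  have sum_π_comp_ι : ∑ x : Skeleton J, π.app ((fromSkeleton J).obj x) ≫ ι.app _ = 𝟙 P :=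
    hι.hom_ext fun j => by
      simpa [Preadditive.comp_sum, reassoc_of% h] using
        Functor.sum_skeleton_averageMap_comp_ι (Cocone.mk P ι) j
  { lift s := ∑ x : Skeleton J, s.π.app ((fromSkeleton J).obj x) ≫ ι.app _
    fac s k := by simp [Preadditive.sum_comp, h, Functor.sum_skeleton_π_comp_averageMap]
    uniq s m hm := by
      rw [← Category.comp_id m, ← sum_π_comp_ι, Preadditive.comp_sum]
      simp [← hm] }

end Limits

end Averaging

section KanExtension

variable {C : Type*} [Category C] {X Y : Type*} [Category X] [Category Y] (f : X ⥤ Y)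

instance CostructuredArrow.isGroupoid [IsGroupoid X] (y : Y) :
    IsGroupoid (CostructuredArrow f y) :=
  isGroupoid_of_reflects_iso (CostructuredArrow.proj f y)

noncomputable def CostructuredArrow.equivStructuredArrow [IsGroupoid Y] (y : Y) :
    CostructuredArrow f y ≌ StructuredArrow y f :=
  Equivalence.mk
    { obj a := StructuredArrow.mk (inv a.hom)
      map u := StructuredArrow.homMk u.left (by simp) }
    { obj b := CostructuredArrow.mk (inv b.hom)
      map u := CostructuredArrow.homMk u.right (by simp) }
    (NatIso.ofComponents fun a => CostructuredArrow.isoMk (Iso.refl _))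
    (NatIso.ofComponents fun b => StructuredArrow.isoMk (Iso.refl _))

namespace Functor

variable [∀ y, HasColimitsOfShape (CostructuredArrow f y) C]

noncomputable def isPointwiseLeftKanExtensionLan (F : X ⥤ C) :
    (LeftExtension.mk (f.lan.obj F) (f.lanUnit.app F)).IsPointwiseLeftKanExtension :=
  isPointwiseLeftKanExtensionOfIsLeftKanExtension (F := F) _ (f.lanUnit.app F)

variable {𝕜 : Type*} [DivisionRing 𝕜] [Preadditive C] [CategoryTheory.Linear 𝕜 C]
  [IsGroupoid X] [∀ y (a b : CostructuredArrow f y), Fintype (a ⟶ b)] (F : X ⥤ C)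

variable (𝕜) in
noncomputable def lanAverage {x : X} {y : Y} (ψ : f.obj x ⟶ y) :
    (f.lan.obj F).obj y ⟶ F.obj x :=
  (f.isPointwiseLeftKanExtensionLan F y).desc
    (Cocone.ofAverageMap 𝕜 (CostructuredArrow.proj f y ⋙ F) (CostructuredArrow.mk ψ))

lemma lanUnit_app_comp_map_comp_lanAverage {x x' : X} {y : Y} (φ : f.obj x ⟶ y)
    (ψ : f.obj x' ⟶ y) :
    (f.lanUnit.app F).app x ≫ (f.lan.obj F).map φ ≫ f.lanAverage 𝕜 F ψ =
      (CostructuredArrow.proj f y ⋙ F).averageMap 𝕜 (.mk φ) (.mk ψ) := by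
  rw [← Category.assoc]
  exact (f.isPointwiseLeftKanExtensionLan F y).fac _ (CostructuredArrow.mk φ)

lemma lanAverage_comp_map {x x' : X} {y : Y} (ψ : f.obj x ⟶ y) (ψ' : f.obj x' ⟶ y) (v : x ⟶ x')
    (hv : f.map v ≫ ψ' = ψ) :
    f.lanAverage 𝕜 F ψ ≫ F.map v = f.lanAverage 𝕜 F ψ' :=
  (f.isPointwiseLeftKanExtensionLan F y).hom_ext' fun x φ => by
    dsimp only [LeftExtension.mk, StructuredArrow.mk_hom_eq_self, StructuredArrow.mk_right]
    rw [reassoc_of% f.lanUnit_app_comp_map_comp_lanAverage (𝕜 := 𝕜) F φ ψ,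
      lanUnit_app_comp_map_comp_lanAverage]
    exact (CostructuredArrow.proj f y ⋙ F).averageMap_comp_map
      (CostructuredArrow.homMk v hv : CostructuredArrow.mk ψ ⟶ CostructuredArrow.mk ψ')

lemma lan_map_app_comp_lanAverage {F' : X ⥤ C} (τ : F ⟶ F') {x : X} {y : Y} (ψ : f.obj x ⟶ y) :
    (f.lan.map τ).app y ≫ f.lanAverage 𝕜 F' ψ = f.lanAverage 𝕜 F ψ ≫ τ.app x :=
  (f.isPointwiseLeftKanExtensionLan F y).hom_ext' fun x' φ => by
    dsimp only [LeftExtension.mk, StructuredArrow.mk_hom_eq_self, StructuredArrow.mk_right]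
    have lanUnit_comp := congr_app (f.lanUnit.naturality τ) x'
    dsimp only [id_obj, comp_obj, whiskeringLeft_obj_obj, id_map, NatTrans.comp_app, comp_map,
      whiskeringLeft_obj_map, whiskerLeft_app] at lanUnit_comp
    rw [(f.lan.map τ).naturality_assoc, ← reassoc_of% lanUnit_comp,
      lanUnit_app_comp_map_comp_lanAverage,
      reassoc_of% f.lanUnit_app_comp_map_comp_lanAverage (𝕜 := 𝕜) F φ ψ]
    exact ((CostructuredArrow.proj f y ⋙ F).averageMap_comp_app (𝕜 := 𝕜)
      (whiskerLeft (CostructuredArrow.proj f y) τ) (.mk φ) (.mk ψ)).symm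

variable (𝕜) in
noncomputable def lanCounitApp (x : X) : (f.lan.obj F).obj (f.obj x) ⟶ F.obj x :=
  f.lanAverage 𝕜 F (𝟙 (f.obj x))

variable [IsGroupoid Y]

lemma lan_obj_map_comp_lanAverage {x : X} {y y' : Y} (ψ : f.obj x ⟶ y) (γ : y ⟶ y') :
    (f.lan.obj F).map γ ≫ f.lanAverage 𝕜 F (ψ ≫ γ) = f.lanAverage 𝕜 F ψ :=
  (f.isPointwiseLeftKanExtensionLan F y).hom_ext' fun x φ => by
    dsimp only [LeftExtension.mk, StructuredArrow.mk_hom_eq_self, StructuredArrow.mk_right]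
    rw [← Functor.map_comp_assoc, lanUnit_app_comp_map_comp_lanAverage,
      lanUnit_app_comp_map_comp_lanAverage]
    exact ((CostructuredArrow.proj f y' ⋙ F).averageMap_comp_of_fullyFaithful
      (CostructuredArrow.mapIso (asIso γ)).fullyFaithfulFunctor (.mk φ) (.mk ψ)).symm

lemma lanAverage_eq_map_inv_comp_lanCounitApp {x : X} {y : Y} (ψ : f.obj x ⟶ y) :
    f.lanAverage 𝕜 F ψ = (f.lan.obj F).map (CategoryTheory.inv ψ) ≫ f.lanCounitApp 𝕜 F x := by
  rw [← f.lan_obj_map_comp_lanAverage F ψ (CategoryTheory.inv ψ), IsIso.hom_inv_id,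
    lanCounitApp]

lemma lan_obj_map_comp_lanCounitApp {x x' : X} (v : x ⟶ x') :
    (f.lan.obj F).map (f.map v) ≫ f.lanCounitApp 𝕜 F x' = f.lanCounitApp 𝕜 F x ≫ F.map v := by
  have h := f.lanAverage_comp_map (𝕜 := 𝕜) F (𝟙 _) (CategoryTheory.inv (f.map v)) v (by simp)
  rw [lanAverage_eq_map_inv_comp_lanCounitApp (ψ := CategoryTheory.inv _), IsIso.inv_inv] at h
  exact h.symm

variable (C 𝕜) in
noncomputable def lanCounit : f.lan ⋙ (whiskeringLeft X Y C).obj f ⟶ 𝟭 (X ⥤ C) where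
  app F :=
    { app := f.lanCounitApp 𝕜 F
      naturality _ _ v := f.lan_obj_map_comp_lanCounitApp F v }
  naturality _ _ τ := by
    ext x
    exact f.lan_map_app_comp_lanAverage _ τ (𝟙 (f.obj x))

variable [CharZero 𝕜] [∀ y, Fintype (Skeleton (CostructuredArrow f y))]

noncomputable def isPointwiseRightKanExtensionLan :
    (RightExtension.mk (f.lan.obj F) ((f.lanCounit C 𝕜).app F)).IsPointwiseRightKanExtension :=
  fun y => IsLimit.ofWhiskerEquivalence (CostructuredArrow.equivStructuredArrow f y)
    ((f.isPointwiseLeftKanExtensionLan F y).isLimitOfAverageMap (𝕜 := 𝕜) _ fun a b => by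
      show ((f.lanUnit.app F).app a.left ≫ (f.lan.obj F).map a.hom) ≫
        (f.lan.obj F).map (CategoryTheory.inv b.hom) ≫ f.lanCounitApp 𝕜 F b.left = _
      rw [← lanAverage_eq_map_inv_comp_lanCounitApp, Category.assoc,
        lanUnit_app_comp_map_comp_lanAverage]
      rfl)

instance : (f.lan.obj F).IsRightKanExtension ((f.lanCounit C 𝕜).app F) :=
  (f.isPointwiseRightKanExtensionLan F).isRightKanExtension

variable (C 𝕜) in
-- The argument of `Functor.ranAdjunction`, with `lanCounit` in place of `ranCounit`.
noncomputable def whiskeringLeftLanAdjunction : (whiskeringLeft X Y C).obj f ⊣ f.lan :=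
  Adjunction.mkOfHomEquiv
    { homEquiv G F := (homEquivOfIsRightKanExtension (α := (f.lanCounit C 𝕜).app F) _ G).symm
      homEquiv_naturality_right {_ _ F₂} _ τ :=
        hom_ext_of_isRightKanExtension _ ((f.lanCounit C 𝕜).app F₂) _ _ (by
          ext x
          have h := congr_app ((f.lanCounit C 𝕜).naturality τ) x
          dsimp only [comp_obj, whiskeringLeft_obj_obj, id_obj, comp_map, whiskeringLeft_obj_map,
            NatTrans.comp_app, whiskerLeft_app, id_map, homEquivOfIsRightKanExtension,
            Equiv.symm_mk, Equiv.coe_fn_mk, whiskerLeft_comp] at h ⊢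
          rw [liftOfIsRightKanExtension_fac_app, NatTrans.comp_app, Category.assoc, h,
            liftOfIsRightKanExtension_fac_app_assoc])
      homEquiv_naturality_left_symm _ _ := by
        simp [homEquivOfIsRightKanExtension] }

end Functor

end KanExtension

section Finiteness

lemma hasColimitsOfShape_of_finite_skeleton (K : Type) [SmallCategory K] [Finite (Skeleton K)]
    [∀ a b : K, Finite (a ⟶ b)] (C : Type*) [Category C] [HasFiniteColimits C] :
    HasColimitsOfShape K C := by
  classical
  have : Fintype (Skeleton K) := .ofFinite _
  have (a b : Skeleton K) : Fintype (a ⟶ b) :=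
    have : Finite (a ⟶ b) := .of_equiv _ InducedCategory.homEquiv.symm
    .ofFinite _
  have : FinCategory (Skeleton K) := {}
  exact hasColimitsOfShape_of_equivalence (skeletonEquivalence K)

variable {X Y : Type*} [Category X] [Category Y] (f : X ⥤ Y)

instance CostructuredArrow.finite_hom [∀ a b : X, Finite (a ⟶ b)] {y : Y}
    (a b : CostructuredArrow f y) : Finite (a ⟶ b) :=
  Finite.of_injective (fun u => u.left) fun _ _ => CostructuredArrow.hom_ext _ _

instance CostructuredArrow.finite_skeleton [Finite (Skeleton X)] (y : Y)
    [∀ x, Finite (f.obj x ⟶ y)] : Finite (Skeleton (CostructuredArrow f y)) := by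
  refine Finite.of_surjective
    (fun p : Σ s : Skeleton X, f.obj ((fromSkeleton X).obj s) ⟶ y => toSkeleton (mk p.2))
    fun z => ?_
  let a := (fromSkeleton _).obj z
  let e := fromSkeletonToSkeletonIso a.left
  refine ⟨⟨toSkeleton a.left, f.map e.hom ≫ a.hom⟩, ?_⟩
  rw [← toSkeleton_fromSkeleton_obj z]
  exact congr_toSkeleton_of_iso (CostructuredArrow.isoMk e)

end Finiteness

end CategoryTheory

theorem pullback_has_ambidextrous_adjoint_general
    (X Y : Type) [Groupoid.{0} X] [Groupoid.{0} Y]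
    (hX : Finite (Skeleton X))
    (hXhom : ∀ a b : X, Finite (a ⟶ b)) (hYhom : ∀ a b : Y, Finite (a ⟶ b))
    (f : X ⥤ Y) :
    ∃ fLower : (X ⥤ FGModuleCat ℂ) ⥤ (Y ⥤ FGModuleCat ℂ),
      Nonempty (fLower ⊣ (Functor.whiskeringLeft X Y (FGModuleCat ℂ)).obj f) ∧
      Nonempty ((Functor.whiskeringLeft X Y (FGModuleCat ℂ)).obj f ⊣ fLower) := by
  have (y : Y) (a b : CostructuredArrow f y) : Fintype (a ⟶ b) := .ofFinite _
  have (y : Y) : Fintype (Skeleton (CostructuredArrow f y)) := .ofFinite _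
  have (y : Y) : HasColimitsOfShape (CostructuredArrow f y) (FGModuleCat ℂ) :=
    hasColimitsOfShape_of_finite_skeleton _ _
  exact ⟨f.lan, ⟨f.lanAdjunction _⟩, ⟨f.whiskeringLeftLanAdjunction _ ℂ⟩⟩

/-- For a functor `f : X → Y` between essentially finite groupoids, the pullback
functor `f* : [Y, Vect_ℂ] → [X, Vect_ℂ]` (precomposition with `f`) admits a functor
`f_* : [X, Vect_ℂ] → [Y, Vect_ℂ]` which is simultaneously left adjoint and right
adjoint to `f*` (an ambidextrous adjunction). -/
theorem pullback_has_ambidextrous_adjoint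
    (X Y : Type) [Groupoid.{0} X] [Groupoid.{0} Y]
    (hX : Finite (Skeleton X)) (hY : Finite (Skeleton Y))
    (hXhom : ∀ a b : X, Finite (a ⟶ b)) (hYhom : ∀ a b : Y, Finite (a ⟶ b))
    (f : X ⥤ Y) :
    ∃ fLower : (X ⥤ FGModuleCat ℂ) ⥤ (Y ⥤ FGModuleCat ℂ),
      Nonempty (fLower ⊣ (Functor.whiskeringLeft X Y (FGModuleCat ℂ)).obj f) ∧
      Nonempty ((Functor.whiskeringLeft X Y (FGModuleCat ℂ)).obj f ⊣ fLower) :=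
  pullback_has_ambidextrous_adjoint_general X Y hX hXhom hYhom f
end
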